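/- arXiv:1912.12961 — 5 statements merged into one kernel-verified Lean document; each statement's English description precedes it below -/
import Mathlib

section
/- Let n be a positive integer, let T > 0 be a real number and let λ be a real number with 0 < λ < T. Let f : ℝ → ℝ be nonnegative and concave on the open interval (0,T). Then ∫_0^λ f(x)^n dx ≥ (λ/T)^{n+1} · ∫_0^T f(x)^n dx. -/
/-!
Concavity and nonnegativity give `s * f x ≤ f (s * x)` for `0 < s ≤ 1`: compare `f` at `s * x`
with the chord from `ε * x` to `x` and let `ε → 0`. Raising to the `n`-th power, integrating over
`(0, T)` and substituting `y = s * x` yields `s ^ (n + 1) * ∫₀ᵀ f ^ n ≤ ∫₀^{sT} f ^ n`; take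
`s = λ / T`. Integrability holds because `f ≤ 2 f ((a + b) / 2)` on `(a, b)`.
-/

open MeasureTheory Set Filter Topology

namespace ConcaveOn

variable {a b T s x : ℝ} {f : ℝ → ℝ}

theorem le_two_mul_apply_midpoint (hf : ConcaveOn ℝ (Ioo a b) f)
    (hf0 : ∀ y ∈ Ioo a b, 0 ≤ f y) (hx : x ∈ Ioo a b) : f x ≤ 2 * f ((a + b) / 2) := by
  have hx' : a + b - x ∈ Ioo a b := ⟨by linarith [hx.2], by linarith [hx.1]⟩
  have hmid := hf.2 hx hx' (by norm_num : (0 : ℝ) ≤ 1 / 2) (by norm_num : (0 : ℝ) ≤ 1 / 2)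
    (by norm_num)
  have hsum : (1 / 2 : ℝ) • x + (1 / 2 : ℝ) • (a + b - x) = (a + b) / 2 := by
    simp only [smul_eq_mul]; ring
  rw [hsum, smul_eq_mul, smul_eq_mul] at hmid
  linarith [hf0 _ hx']

theorem integrableOn_pow (hf : ConcaveOn ℝ (Ioo a b) f) (hf0 : ∀ y ∈ Ioo a b, 0 ≤ f y)
    (n : ℕ) : IntegrableOn (fun x => f x ^ n) (Ioo a b) := by
  refine IntegrableOn.of_bound measure_Ioo_lt_top
    (((hf.continuousOn isOpen_Ioo).pow n).aestronglyMeasurable measurableSet_Ioo)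
    ((2 * f ((a + b) / 2)) ^ n) (ae_restrict_of_forall_mem measurableSet_Ioo fun x hx => ?_)
  rw [Real.norm_eq_abs, abs_pow, abs_of_nonneg (hf0 x hx)]
  exact pow_le_pow_left₀ (hf0 x hx) (hf.le_two_mul_apply_midpoint hf0 hx) n

theorem intervalIntegrable_pow (hf : ConcaveOn ℝ (Ioo a b) f)
    (hf0 : ∀ y ∈ Ioo a b, 0 ≤ f y) (hab : a ≤ b) (n : ℕ) :
    IntervalIntegrable (fun x => f x ^ n) volume a b :=
  (intervalIntegrable_iff_integrableOn_Ioo_of_le hab).2 (hf.integrableOn_pow hf0 n)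

theorem mul_le_apply_mul (hf : ConcaveOn ℝ (Ioo 0 T) f) (hf0 : ∀ y ∈ Ioo 0 T, 0 ≤ f y)
    (hs0 : 0 < s) (hs1 : s ≤ 1) (hx : x ∈ Ioo 0 T) : s * f x ≤ f (s * x) := by
  have hchord : ∀ ε ∈ Ioo 0 s, (s - ε) / (1 - ε) * f x ≤ f (s * x) := by
    rintro ε ⟨hε0, hεs⟩
    have h1ε : 0 < 1 - ε := by linarith
    set t := (s - ε) / (1 - ε) with ht
    have ht0 : 0 ≤ t := div_nonneg (by linarith) h1ε.le
    have ht1 : t ≤ 1 := (div_le_one h1ε).2 (by linarith)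
    have hεx : ε * x ∈ Ioo 0 T := ⟨by nlinarith [hx.1], by nlinarith [hx.1, hx.2]⟩
    have hcomb := hf.2 hx hεx ht0 (sub_nonneg.2 ht1) (add_sub_cancel t 1)
    have hpoint : t • x + (1 - t) • (ε * x) = s * x := by
      simp only [smul_eq_mul, ht]
      field_simp
      ring
    rw [hpoint, smul_eq_mul, smul_eq_mul] at hcomb
    nlinarith [mul_nonneg (sub_nonneg.2 ht1) (hf0 _ hεx)]
  have hcont : ContinuousAt (fun ε : ℝ => (s - ε) / (1 - ε) * f x) 0 := by
    fun_prop (disch := norm_num)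
  have hlim : Tendsto (fun ε : ℝ => (s - ε) / (1 - ε) * f x) (𝓝[>] 0) (𝓝 (s * f x)) := by
    simpa using hcont.tendsto.mono_left nhdsWithin_le_nhds
  exact le_of_tendsto hlim (mem_of_superset (Ioo_mem_nhdsGT hs0) hchord)

theorem pow_succ_mul_integral_pow_le (hf : ConcaveOn ℝ (Ioo 0 T) f)
    (hf0 : ∀ y ∈ Ioo 0 T, 0 ≤ f y) (hs0 : 0 < s) (hs1 : s ≤ 1) (hT : 0 ≤ T) (n : ℕ) :
    s ^ (n + 1) * ∫ x in (0 : ℝ)..T, f x ^ n ≤ ∫ x in (0 : ℝ)..s * T, f x ^ n := by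
  have hint := hf.intervalIntegrable_pow hf0 hT n
  have hint_sT : IntervalIntegrable (fun x => f x ^ n) volume 0 (s * T) :=
    hint.mono_set (by
      rw [uIcc_of_le hT, uIcc_of_le (mul_nonneg hs0.le hT)]
      exact Icc_subset_Icc_right (mul_le_of_le_one_left hT hs1))
  have hint_comp : IntervalIntegrable (fun x => f (s * x) ^ n) volume 0 T := by
    simpa [hs0.ne'] using hint_sT.comp_mul_left (c := s)
  calc s ^ (n + 1) * ∫ x in (0 : ℝ)..T, f x ^ n
      = s * ∫ x in (0 : ℝ)..T, (s * f x) ^ n := by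
        simp only [mul_pow, intervalIntegral.integral_const_mul]; ring
    _ ≤ s * ∫ x in (0 : ℝ)..T, f (s * x) ^ n := by
        gcongr
        refine intervalIntegral.integral_mono_on_of_le_Ioo hT
          (by simpa only [mul_pow] using hint.const_mul (s ^ n)) hint_comp fun x hx => ?_
        exact pow_le_pow_left₀ (mul_nonneg hs0.le (hf0 x hx))
          (hf.mul_le_apply_mul hf0 hs0 hs1 hx) n
    _ = ∫ x in (0 : ℝ)..s * T, f x ^ n := by
        rw [← smul_eq_mul, intervalIntegral.smul_integral_comp_mul_left (fun x => f x ^ n),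
          mul_zero]

end ConcaveOn

theorem concave_integral_pow_lower_bound_general
    (n : ℕ) (T lam : ℝ) (hlam : 0 < lam) (hlamT : lam < T)
    (f : ℝ → ℝ) (hconc : ConcaveOn ℝ (Set.Ioo 0 T) f)
    (hnonneg : ∀ x ∈ Set.Ioo 0 T, 0 ≤ f x) :
    (lam / T) ^ (n + 1) * ∫ x in (0:ℝ)..T, f x ^ n ≤ ∫ x in (0:ℝ)..lam, f x ^ n := by
  have hT : 0 < T := hlam.trans hlamT
  have h := hconc.pow_succ_mul_integral_pow_le hnonneg (div_pos hlam hT)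
    ((div_le_one hT).2 hlamT.le) hT.le n
  rwa [div_mul_cancel₀ lam hT.ne'] at h

/-- Lemma 4.10: for a nonnegative concave function `f` on `(0,T)` and `0 < λ < T`,
`∫_0^λ f^n ≥ (λ/T)^(n+1) ∫_0^T f^n`. -/
theorem concave_integral_pow_lower_bound
    (n : ℕ) (hn : 0 < n) (T lam : ℝ) (hT : 0 < T) (hlam : 0 < lam) (hlamT : lam < T)
    (f : ℝ → ℝ) (hconc : ConcaveOn ℝ (Set.Ioo 0 T) f)
    (hnonneg : ∀ x ∈ Set.Ioo 0 T, 0 ≤ f x) :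
    (lam / T) ^ (n + 1) * ∫ x in (0:ℝ)..T, f x ^ n ≤ ∫ x in (0:ℝ)..lam, f x ^ n :=
  concave_integral_pow_lower_bound_general n T lam hlam hlamT f hconc hnonneg
end

section
/- Let n be a positive integer, let T > 0 be a real number and let λ be a real number with 0 < λ < T. Let f : ℝ → ℝ be nonnegative and concave on the open interval (0,T). Then ∫_0^λ f(x)^n dx ≥ f(λ)^n · λ/(n+1). -/
/-!
On `(0, λ]` a nonnegative concave function dominates the chord from `(0, 0)` to `(λ, f λ)`,
i.e. `f x ≥ (x / λ) f λ`; integrating the `n`-th power of this linear minorant over `[0, λ]` gives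
`f(λ)^n λ / (n + 1)`. Since `f` is concave only on the open interval, the chord inequality is
obtained from the chords through `(u, f u)` with `u ↓ 0`, dropping the nonnegative term `f u`.
Dropping instead the term at a point beyond `λ` bounds `f` on `(0, λ]` by a multiple of `f λ`,
which makes `f^n` integrable.
-/

open MeasureTheory Set Filter Topology

section

variable {s : Set ℝ} {f : ℝ → ℝ} {a b x y z : ℝ}

theorem ConcaveOn.secant_le (hf : ConcaveOn ℝ s f) (hx : x ∈ s) (hz : z ∈ s) (hxy : x ≤ y)
    (hyz : y ≤ z) (hxz : x < z) : ((z - y) * f x + (y - x) * f z) / (z - x) ≤ f y := by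
  have hzx : 0 < z - x := sub_pos.2 hxz
  have key := hf.2 hx hz (div_nonneg (sub_nonneg.2 hyz) hzx.le)
    (div_nonneg (sub_nonneg.2 hxy) hzx.le) (by field)
  have hy : (z - y) / (z - x) * x + (y - x) / (z - x) * z = y := by field
  simp only [smul_eq_mul, hy] at key
  calc ((z - y) * f x + (y - x) * f z) / (z - x)
      = (z - y) / (z - x) * f x + (y - x) / (z - x) * f z := by ring
    _ ≤ f y := key

theorem ConcaveOn.sub_div_sub_mul_le_of_nonneg (hf : ConcaveOn ℝ (Ioo a b) f)
    (h0 : ∀ t ∈ Ioo a b, 0 ≤ f t) (hax : a < x) (hxy : x ≤ y) (hyb : y < b) :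
    (x - a) / (y - a) * f y ≤ f x := by
  have hlim : Tendsto (fun u => (x - u) / (y - u) * f y) (𝓝[>] a)
      (𝓝 ((x - a) / (y - a) * f y)) := by
    refine ContinuousWithinAt.tendsto (ContinuousAt.continuousWithinAt ?_)
    exact ((continuousAt_const.sub continuousAt_id).div (continuousAt_const.sub continuousAt_id)
      (sub_ne_zero.2 (hax.trans_le hxy).ne')).mul continuousAt_const
  refine le_of_tendsto hlim ?_
  filter_upwards [Ioo_mem_nhdsGT hax] with u hu
  have hus : u ∈ Ioo a b := ⟨hu.1, hu.2.trans (hxy.trans_lt hyb)⟩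
  have hyu : 0 < y - u := by linarith [hu.2]
  have hsec := hf.secant_le hus ⟨hax.trans_le hxy, hyb⟩ hu.2.le hxy (hu.2.trans_le hxy)
  calc (x - u) / (y - u) * f y ≤ ((y - x) * f u + (x - u) * f y) / (y - u) := by
        rw [add_div, div_mul_eq_mul_div]
        have := mul_nonneg (sub_nonneg.2 hxy) (h0 u hus)
        linarith [div_nonneg this hyu.le]
    _ ≤ f x := hsec

theorem ConcaveOn.le_sub_div_sub_mul_of_nonneg (hf : ConcaveOn ℝ (Ioo a b) f)
    (h0 : ∀ t ∈ Ioo a b, 0 ≤ f t) (hax : a < x) (hxy : x ≤ y) (hyz : y < z) (hzb : z < b) :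
    f x ≤ (z - a) / (z - y) * f y := by
  have hzs : z ∈ Ioo a b := ⟨by linarith, hzb⟩
  have hsec := hf.secant_le ⟨hax, by linarith⟩ hzs hxy hyz.le (hxy.trans_lt hyz)
  have hzy : 0 < z - y := sub_pos.2 hyz
  rw [div_le_iff₀ (by linarith)] at hsec
  rw [div_mul_eq_mul_div, le_div_iff₀ hzy]
  nlinarith [mul_nonneg (sub_nonneg.2 hxy) (h0 z hzs), h0 y ⟨by linarith, by linarith⟩]

theorem ConcaveOn.intervalIntegrable_pow_of_nonneg (hf : ConcaveOn ℝ (Ioo a b) f)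
    (h0 : ∀ t ∈ Ioo a b, 0 ≤ f t) (n : ℕ) (hay : a ≤ y) (hyb : y < b) :
    IntervalIntegrable (fun x => f x ^ n) volume a y := by
  have hsub : Ioc a y ⊆ Ioo a b := fun t ht => ⟨ht.1, ht.2.trans_lt hyb⟩
  obtain ⟨z, hyz, hzb⟩ := exists_between hyb
  have hcont : ContinuousOn (fun x => f x ^ n) (Ioc a y) :=
    ((hf.continuousOn isOpen_Ioo).mono hsub).pow n
  rw [intervalIntegrable_iff_integrableOn_Ioc_of_le hay]
  refine IntegrableOn.of_bound measure_Ioc_lt_top (hcont.aestronglyMeasurable measurableSet_Ioc)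
    (((z - a) / (z - y) * f y) ^ n) ?_
  filter_upwards [self_mem_ae_restrict measurableSet_Ioc] with x hx
  have hfx := h0 x (hsub hx)
  rw [Real.norm_of_nonneg (pow_nonneg hfx n)]
  exact pow_le_pow_left₀ hfx (hf.le_sub_div_sub_mul_of_nonneg h0 hx.1 hx.2 hyz hzb) n

theorem integral_sub_div_sub_mul_pow (n : ℕ) (c : ℝ) (hay : a ≠ y) :
    ∫ x in a..y, ((x - a) / (y - a) * c) ^ n = c ^ n * (y - a) / (n + 1) := by
  have hya : y - a ≠ 0 := sub_ne_zero.2 hay.symm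
  simp only [div_mul_eq_mul_div, div_pow, mul_pow, intervalIntegral.integral_div,
    intervalIntegral.integral_mul_const, intervalIntegral.integral_comp_sub_right
      (fun x => x ^ n), sub_self, integral_pow]
  field_simp
  ring

theorem ConcaveOn.pow_mul_sub_div_le_integral_pow (hf : ConcaveOn ℝ (Ioo a b) f)
    (h0 : ∀ t ∈ Ioo a b, 0 ≤ f t) (n : ℕ) (hay : a < y) (hyb : y < b) :
    f y ^ n * (y - a) / (n + 1) ≤ ∫ x in a..y, f x ^ n := by
  rw [← integral_sub_div_sub_mul_pow n (f y) hay.ne]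
  refine intervalIntegral.integral_mono_on_of_le_Ioo hay.le
    ((by fun_prop : Continuous _).intervalIntegrable _ _)
    (hf.intervalIntegrable_pow_of_nonneg h0 n hay.le hyb) fun x hx => ?_
  have hchord := hf.sub_div_sub_mul_le_of_nonneg h0 hx.1 hx.2.le hyb
  exact pow_le_pow_left₀ (mul_nonneg (div_nonneg (by linarith [hx.1]) (by linarith))
    (h0 y ⟨hay, hyb⟩)) hchord n

end

theorem concave_integral_pow_left_bound_general
    (n : ℕ) (T lam : ℝ) (hlam : 0 < lam) (hlamT : lam < T)
    (f : ℝ → ℝ) (hconc : ConcaveOn ℝ (Set.Ioo 0 T) f)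
    (hnonneg : ∀ x ∈ Set.Ioo 0 T, 0 ≤ f x) :
    f lam ^ n * lam / ((n : ℝ) + 1) ≤ ∫ x in (0:ℝ)..lam, f x ^ n := by
  simpa only [sub_zero] using hconc.pow_mul_sub_div_le_integral_pow hnonneg n hlam hlamT

/-- First displayed inequality in the proof of Lemma 4.10:
`∫_0^λ f^n ≥ f(λ)^n · λ/(n+1)`. -/
theorem concave_integral_pow_left_bound
    (n : ℕ) (hn : 0 < n) (T lam : ℝ) (hT : 0 < T) (hlam : 0 < lam) (hlamT : lam < T)
    (f : ℝ → ℝ) (hconc : ConcaveOn ℝ (Set.Ioo 0 T) f)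
    (hnonneg : ∀ x ∈ Set.Ioo 0 T, 0 ≤ f x) :
    f lam ^ n * lam / ((n : ℝ) + 1) ≤ ∫ x in (0:ℝ)..lam, f x ^ n :=
  concave_integral_pow_left_bound_general n T lam hlam hlamT f hconc hnonneg
end

section
/- Let n be a positive integer, let T > 0 be a real number and let λ be a real number with 0 < λ < T. Let f : ℝ → ℝ be nonnegative and concave on the open interval (0,T). Then ∫_λ^T f(x)^n dx ≤ f(λ)^n · (λ/(n+1)) · ((T/λ)^{n+1} − 1). -/
open MeasureTheory Set

/-- The slope inequality for `ε < y < x`, with `f ε ≥ 0` dropped, is polynomial in `ε` and so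
survives the limit `ε → 0⁺`, although `0` lies outside the domain of concavity. -/
theorem ConcaveOn.mul_le_mul_of_nonneg_Ioo {f : ℝ → ℝ} {T x y : ℝ}
    (hf : ConcaveOn ℝ (Ioo 0 T) f) (hf0 : ∀ t ∈ Ioo 0 T, 0 ≤ f t)
    (hy : 0 < y) (hyx : y < x) (hxT : x < T) :
    y * f x ≤ x * f y := by
  have hsecant : ∀ ε ∈ Ioo 0 y, (y - ε) * (f x - f y) ≤ (x - y) * f y := by
    rintro ε ⟨hε, hεy⟩
    have hslope := hf.slope_anti_adjacent ⟨hε, by linarith⟩ ⟨by linarith, hxT⟩ hεy hyx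
    rw [div_le_div_iff₀ (by linarith) (by linarith)] at hslope
    nlinarith [hf0 ε ⟨hε, by linarith⟩]
  have hzero := le_on_closure hsecant (by fun_prop) (by fun_prop)
    (by rw [closure_Ioo hy.ne]; exact left_mem_Icc.2 hy.le)
  linarith

theorem concave_integral_pow_right_bound_general
    (n : ℕ) (T lam : ℝ) (hlam : 0 < lam) (hlamT : lam < T)
    (f : ℝ → ℝ) (hconc : ConcaveOn ℝ (Set.Ioo 0 T) f)
    (hnonneg : ∀ x ∈ Set.Ioo 0 T, 0 ≤ f x) :
    ∫ x in lam..T, f x ^ n ≤ f lam ^ n * (lam / ((n : ℝ) + 1)) * ((T / lam) ^ (n + 1) - 1) := by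
  have hpos : ∀ x ∈ Ioo lam T, 0 ≤ f x ^ n := fun x hx =>
    pow_nonneg (hnonneg x ⟨hlam.trans hx.1, hx.2⟩) n
  have hchord : ∀ x ∈ Ioo lam T, f x ^ n ≤ (f lam / lam * x) ^ n := fun x hx => by
    refine pow_le_pow_left₀ (hnonneg x ⟨hlam.trans hx.1, hx.2⟩) ?_ n
    rw [div_mul_eq_mul_div, le_div_iff₀ hlam]
    linarith [hconc.mul_le_mul_of_nonneg_Ioo hnonneg hlam hx.1 hx.2]
  calc ∫ x in lam..T, f x ^ n
      ≤ ∫ x in lam..T, (f lam / lam * x) ^ n := by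
        simp only [intervalIntegral.integral_of_le hlamT.le, integral_Ioc_eq_integral_Ioo]
        exact setIntegral_mono_of_nonneg hpos hchord
          ((Continuous.integrableOn_Icc (by fun_prop)).mono_set Ioo_subset_Icc_self)
    _ = (f lam / lam) ^ n * ((T ^ (n + 1) - lam ^ (n + 1)) / (n + 1)) := by
        simp_rw [mul_pow, intervalIntegral.integral_const_mul, integral_pow]
    _ = f lam ^ n * (lam / ((n : ℝ) + 1)) * ((T / lam) ^ (n + 1) - 1) := by
        rw [div_pow, div_pow]
        field_simp
        ring

/-- Second displayed inequality in the proof of Lemma 4.10: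
`∫_λ^T f^n ≤ f(λ)^n · (λ/(n+1)) · ((T/λ)^(n+1) − 1)`. -/
theorem concave_integral_pow_right_bound
    (n : ℕ) (hn : 0 < n) (T lam : ℝ) (hT : 0 < T) (hlam : 0 < lam) (hlamT : lam < T)
    (f : ℝ → ℝ) (hconc : ConcaveOn ℝ (Set.Ioo 0 T) f)
    (hnonneg : ∀ x ∈ Set.Ioo 0 T, 0 ≤ f x) :
    ∫ x in lam..T, f x ^ n ≤ f lam ^ n * (lam / ((n : ℝ) + 1)) * ((T / lam) ^ (n + 1) - 1) :=
  concave_integral_pow_right_bound_general n T lam hlam hlamT f hconc hnonneg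
end

section
/- Let n be a positive integer and let ν be a Borel probability measure on ℝ with compact support such that ∫_ℝ x dν(x) = 0. Let λ_max denote the supremum of the topological support of ν (a finite real number, and λ_max ≥ 0 since ν has mean zero), and define g : ℝ → ℝ by g(λ) = (ν([λ,∞)))^{1/n}. Assume that g is concave on the open ray (−∞, λ_max). Then for every real t > 0 one has g(−t·λ_max) ≥ 1 − 1/√(n·t). -/
/-!
Since `ν` has mean zero and `x ≤ λ_max` for `ν`-a.e. `x`, integrating the a.e. bound
`x ≤ a + (λ_max - a) 𝟙[a, ∞)(x)` at `a = -t λ_max` gives `ν([-t λ_max, ∞)) ≥ t / (1 + t)`.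
It remains to see `(t / (1 + t))^(1/n) ≥ 1 - ε` with `ε = 1 / √(n t)`, which follows from
Bernoulli's inequality in the form `(1 - ε)^n (1 + n ε) ≤ 1`.
-/

open MeasureTheory Set

lemma one_sub_pow_mul_one_add_mul_le_one {ε : ℝ} (h0 : 0 ≤ ε) (h1 : ε ≤ 1) (n : ℕ) :
    (1 - ε) ^ n * (1 + n * ε) ≤ 1 :=
  calc (1 - ε) ^ n * (1 + n * ε) ≤ (1 - ε) ^ n * (1 + ε) ^ n :=
        mul_le_mul_of_nonneg_left (one_add_mul_le_pow (by linarith) n)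
          (pow_nonneg (by linarith) n)
    _ = (1 - ε ^ 2) ^ n := by rw [← mul_pow]; ring
    _ ≤ 1 := pow_le_one₀ (by nlinarith) (by nlinarith)

lemma one_sub_one_div_sqrt_le_rpow {n : ℕ} (hn : 0 < n) {t : ℝ} (ht : 0 < t) :
    1 - 1 / √(n * t) ≤ (t / (1 + t)) ^ ((1 : ℝ) / n) := by
  set ε := 1 / √(n * t) with hε
  rcases le_or_gt 1 ε with h1 | h1
  · have : 0 ≤ (t / (1 + t)) ^ ((1 : ℝ) / n) := by positivity
    linarith
  have hnt : 0 < (n : ℝ) * t := by positivity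
  have hsqrt : 1 < √(n * t) := by rwa [hε, div_lt_one (by positivity)] at h1
  -- `n ε t = √(n t) ≥ 1`, so `1 + t ≤ (1 + n ε) t`
  have hnεt : n * ε * t = √(n * t) := by
    rw [hε, mul_assoc, mul_comm ε, ← mul_assoc, mul_one_div, div_eq_iff (by positivity),
      Real.mul_self_sqrt hnt.le]
  have hpow : (1 - ε) ^ n ≤ t / (1 + t) := by
    rw [le_div_iff₀ (by linarith)]
    have hB := one_sub_pow_mul_one_add_mul_le_one (by positivity) h1.le n
    have : 0 ≤ (1 - ε) ^ n := pow_nonneg (by linarith) n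
    nlinarith
  calc 1 - ε = ((1 - ε) ^ n) ^ ((1 : ℝ) / n) := by
        rw [one_div, Real.pow_rpow_inv_natCast (by linarith) hn.ne']
    _ ≤ (t / (1 + t)) ^ ((1 : ℝ) / n) :=
        Real.rpow_le_rpow (pow_nonneg (by linarith) n) hpow (by positivity)

namespace MeasureTheory.Measure

lemma bddAbove_support_of_measure_Ioi_eq_zero {μ : Measure ℝ} {M : ℝ} (h : μ (Ioi M) = 0) :
    BddAbove μ.support :=
  ⟨M, fun _ hx => not_lt.1 fun hMx => subset_compl_support_of_isOpen isOpen_Ioi h hMx hx⟩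

lemma ae_le_sSup_support {μ : Measure ℝ} (h : BddAbove μ.support) :
    ∀ᵐ x ∂μ, x ≤ sSup μ.support :=
  measure_mono_null (fun _ hx hxS => hx (le_csSup h hxS)) measure_compl_support

end MeasureTheory.Measure

section MeanZero

variable {ν : Measure ℝ} [IsProbabilityMeasure ν] {L : ℝ}

lemma neg_le_mul_measureReal_Ici (hint : Integrable id ν) (hmean : ∫ x, x ∂ν = 0)
    (hL : ∀ᵐ x ∂ν, x ≤ L) (a : ℝ) : -a ≤ (L - a) * ν.real (Ici a) := by
  have hstep : Integrable (fun x => a + (Ici a).indicator (fun _ => L - a) x) ν :=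
    (integrable_const a).add ((integrable_const (L - a)).indicator measurableSet_Ici)
  have hle : ∀ᵐ x ∂ν, x ≤ a + (Ici a).indicator (fun _ => L - a) x := by
    filter_upwards [hL] with x hx
    by_cases hax : a ≤ x
    · simp [indicator_of_mem (mem_Ici.2 hax), hx]
    · simp [indicator_of_notMem (mt mem_Ici.1 hax), (not_le.1 hax).le]
  have := integral_mono_ae hint hstep hle
  rw [integral_add (integrable_const a) ((integrable_const (L - a)).indicator measurableSet_Ici),
    integral_indicator_const _ measurableSet_Ici] at this
  simp only [id, hmean, integral_const, probReal_univ, smul_eq_mul, one_mul] at this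
  linarith

lemma measureReal_Ici_zero_eq_one (hint : Integrable id ν) (hmean : ∫ x, x ∂ν = 0)
    (hL : ∀ᵐ x ∂ν, x ≤ 0) : ν.real (Ici 0) = 1 := by
  have hzero : (fun x => -x) =ᵐ[ν] 0 :=
    (integral_eq_zero_iff_of_nonneg_ae (hL.mono fun _ => neg_nonneg.2) hint.neg).1
      (by rw [integral_neg, hmean, neg_zero])
  have hnull : ∀ᵐ x ∂ν, x ∈ Ici 0 := hzero.mono fun x hx => (neg_eq_zero.1 hx).ge
  rw [measureReal_def, (prob_compl_eq_zero_iff measurableSet_Ici).1 (ae_iff.1 hnull),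
    ENNReal.toReal_one]

lemma div_one_add_le_measureReal_Ici (hint : Integrable id ν) (hmean : ∫ x, x ∂ν = 0)
    (hL : ∀ᵐ x ∂ν, x ≤ L) {t : ℝ} (ht : 0 < t) : t / (1 + t) ≤ ν.real (Ici (-t * L)) := by
  have hL0 : 0 ≤ L := by simpa using neg_le_mul_measureReal_Ici hint hmean hL L
  rcases hL0.eq_or_lt with rfl | hLpos
  · rw [mul_zero, measureReal_Ici_zero_eq_one hint hmean hL, div_le_one (by positivity)]
    linarith
  · have := neg_le_mul_measureReal_Ici hint hmean hL (-t * L)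
    rw [div_le_iff₀ (by positivity)]
    nlinarith

end MeanZero

theorem dh_measure_tail_estimate_general
    (n : ℕ) (hn : 0 < n) (ν : Measure ℝ) [IsProbabilityMeasure ν]
    (hcpt : ∃ M : ℝ, ν {x : ℝ | M < |x|} = 0)
    (hmean : ∫ x, x ∂ν = 0)
    (lamMax : ℝ)
    (hlamMax : lamMax = sSup {x : ℝ | ∀ U ∈ nhds x, 0 < ν U})
    (g : ℝ → ℝ)
    (hg : g = fun lam => (ν (Set.Ici lam)).toReal ^ ((1 : ℝ) / n)) :
    ∀ t : ℝ, 0 < t → 1 - 1 / Real.sqrt ((n : ℝ) * t) ≤ g (-t * lamMax) := by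
  intro t ht
  obtain ⟨M, hM⟩ := hcpt
  have hint : Integrable id ν :=
    .of_bound aestronglyMeasurable_id M
      (ae_iff.2 (measure_mono_null (fun _ hx => not_le.1 hx) hM))
  have hlamMax_support : lamMax = sSup ν.support := by
    simp only [hlamMax, ← Measure.mem_support_iff_forall, ofPred_mem_eq]
  have hsupp : BddAbove ν.support :=
    Measure.bddAbove_support_of_measure_Ioi_eq_zero
      (measure_mono_null (fun x hx => (mem_Ioi.1 hx).trans_le (le_abs_self x)) hM)
  have hle : ∀ᵐ x ∂ν, x ≤ lamMax := hlamMax_support ▸ Measure.ae_le_sSup_support hsupp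
  subst hg
  calc 1 - 1 / √(n * t) ≤ (t / (1 + t)) ^ ((1 : ℝ) / n) := one_sub_one_div_sqrt_le_rpow hn ht
    _ ≤ (ν (Ici (-t * lamMax))).toReal ^ ((1 : ℝ) / n) :=
        Real.rpow_le_rpow (by positivity) (div_one_add_le_measureReal_Ici hint hmean hle ht)
          (by positivity)

/-- Lemma 4.12: tail estimate for a compactly supported probability measure `ν` on `ℝ` with
mean zero whose upper tail function `g(λ) = ν([λ,∞))^(1/n)` is concave on `(−∞, λ_max)`,
where `λ_max` is the supremum of the topological support of `ν`. Then
`g(−t·λ_max) ≥ 1 − 1/√(nt)` for all `t > 0`. -/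
theorem dh_measure_tail_estimate
    (n : ℕ) (hn : 0 < n) (ν : Measure ℝ) [IsProbabilityMeasure ν]
    (hcpt : ∃ M : ℝ, ν {x : ℝ | M < |x|} = 0)
    (hmean : ∫ x, x ∂ν = 0)
    (lamMax : ℝ)
    (hlamMax : lamMax = sSup {x : ℝ | ∀ U ∈ nhds x, 0 < ν U})
    (g : ℝ → ℝ)
    (hg : g = fun lam => (ν (Set.Ici lam)).toReal ^ ((1 : ℝ) / n))
    (hconc : ConcaveOn ℝ (Set.Iio lamMax) g) :
    ∀ t : ℝ, 0 < t → 1 - 1 / Real.sqrt ((n : ℝ) * t) ≤ g (-t * lamMax) :=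
  dh_measure_tail_estimate_general n hn ν hcpt hmean lamMax hlamMax g hg
end

section
/- Let n be a positive integer, let t > 0 be a real number, and let u be a real number with 0 ≤ u ≤ 1. If (n+1)·u ≥ n + u^{n+1} − u^n/t, then u ≥ 1 − 1/√(n·t). -/
lemma key_poly (u : ℝ) (hu0 : 0 ≤ u) (hu1 : u ≤ 1) :
    ∀ n : ℕ, 1 ≤ n → (n : ℝ) * (1 - u) ^ 2 ≤ (n : ℝ) + u ^ (n + 1) - ((n : ℝ) + 1) * u := by
  intro n hn
  induction n with
  | zero => omega
  | succ m ih =>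
    rcases Nat.eq_or_lt_of_le hn with h1 | h1
    · simp [← h1]; ring_nf; nlinarith
    · have hm : 1 ≤ m := by omega
      have := ih hm
      have hpow : u ^ (m + 1) ≤ u := by
        calc u ^ (m + 1) ≤ u ^ 1 := pow_le_pow_of_le_one hu0 hu1 (by omega)
        _ = u := pow_one u
      have step : (1 - u) * (u - u ^ (m + 1)) ≥ 0 := by
        apply mul_nonneg <;> linarith
      push_cast
      have : u ^ (m + 1 + 1) = u ^ (m + 1) * u := by ring
      nlinarith [this]

/-- Concluding algebraic step of the proof of Lemma 4.12: if `0 ≤ u ≤ 1`, `t > 0` and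
`(n+1)u ≥ n + u^(n+1) − u^n/t`, then `u ≥ 1 − 1/√(nt)`. -/
theorem u_lower_bound (n : ℕ) (hn : 0 < n) (t u : ℝ) (ht : 0 < t)
    (hu0 : 0 ≤ u) (hu1 : u ≤ 1)
    (h : (n : ℝ) + u ^ (n + 1) - u ^ n / t ≤ ((n : ℝ) + 1) * u) :
    1 - 1 / Real.sqrt ((n : ℝ) * t) ≤ u := by
  have hn' : (1:ℝ) ≤ n := by exact_mod_cast hn
  have key := key_poly u hu0 hu1 n hn
  have hun : u ^ n ≤ 1 := pow_le_one₀ hu0 hu1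
  have h1 : (n : ℝ) * (1 - u) ^ 2 ≤ 1 / t := by
    have hd : u ^ n / t ≤ 1 / t := by gcongr
    linarith
  have hnt : 0 < (n : ℝ) * t := by positivity
  have h2 : (1 - u) ^ 2 ≤ 1 / ((n : ℝ) * t) := by
    rw [le_div_iff₀ hnt]
    calc (1-u)^2 * ((n:ℝ)*t) = ((n:ℝ) * (1-u)^2) * t := by ring
    _ ≤ (1/t) * t := by nlinarith
    _ = 1 := by field_simp
  have h3 : 1 - u ≤ Real.sqrt (1 / ((n:ℝ)*t)) := by
    calc 1 - u ≤ |1 - u| := le_abs_self _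
    _ = Real.sqrt ((1-u)^2) := (Real.sqrt_sq_eq_abs _).symm
    _ ≤ _ := Real.sqrt_le_sqrt h2
  rw [one_div, Real.sqrt_inv, ← one_div] at h3
  linarith
end
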